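/- Let K be the nonempty semialgebraic set defined by h and g, let A ⊆ ℕ^n be finite, suppose ℝ[x]_A is K-full and I(h)+Q(g) is archimedean. Define Q_A^k(K) = {p ∈ ℝ[x]_A : p ∈ Q_k(g) + I_{2k}(h)}. Then int(P_A(K)) ⊆ ∪_{k=1}^∞ Q_A^k(K) ⊆ P_A(K); that is, every polynomial in the interior of P_A(K) belongs to Q_k(g)+I_{2k}(h) for some k, and every p ∈ ℝ[x]_A lying in some Q_k(g)+I_{2k}(h) is nonnegative on K. -/

import Mathlib

open MeasureTheory MvPolynomial Finset

noncomputable section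

/-- Exponent vectors `α ∈ ℕ^n`. -/
abbrev Exp (n : ℕ) := Fin n → ℕ

/-- Evaluation of the monomial `x^α` at a point `u ∈ ℝ^n`. -/
def monoEval {n : ℕ} (α : Exp n) (u : Fin n → ℝ) : ℝ := ∏ i, u i ^ α i

/-- A polynomial in `ℝ[x]_A` is identified with its coefficient vector `p : A → ℝ`;
this is its evaluation at `u`. -/
def evalA {n : ℕ} (A : Finset (Exp n)) (p : A → ℝ) (u : Fin n → ℝ) : ℝ :=
  ∑ α : A, p α * monoEval (α : Exp n) u

/-- The pairing `⟨p, y⟩ = ∑_{α ∈ A} p_α y_α` between `ℝ[x]_A` and `ℝ^A`. -/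
def pairA {n : ℕ} (A : Finset (Exp n)) (p y : A → ℝ) : ℝ :=
  ∑ α : A, p α * y α

/-- The cone `P_A(K)` of polynomials in `ℝ[x]_A` nonnegative on `K`. -/
def PAcone {n : ℕ} (A : Finset (Exp n)) (K : Set (Fin n → ℝ)) : Set (A → ℝ) :=
  {p | ∀ u ∈ K, 0 ≤ evalA A p u}

/-- The cone `R_A(K)` of A-truncated moment sequences admitting a representing
(positive Borel) measure supported in `K`. -/
def RAcone {n : ℕ} (A : Finset (Exp n)) (K : Set (Fin n → ℝ)) : Set (A → ℝ) :=
  {y | ∃ μ : Measure (Fin n → ℝ), μ Kᶜ = 0 ∧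
        ∀ α : A, Integrable (monoEval (α : Exp n)) μ ∧
                 y α = ∫ u, monoEval (α : Exp n) u ∂μ}

/-- `ℝ[x]_A` is `K`-full: some `p ∈ ℝ[x]_A` is strictly positive on `K`. -/
def KFull {n : ℕ} (A : Finset (Exp n)) (K : Set (Fin n → ℝ)) : Prop :=
  ∃ p : A → ℝ, ∀ u ∈ K, 0 < evalA A p u

/-- The semialgebraic set `K = {x : h(x) = 0, g(x) ≥ 0}`. -/
def semiK {n m1 m2 : ℕ} (h : Fin m1 → MvPolynomial (Fin n) ℝ)
    (g : Fin m2 → MvPolynomial (Fin n) ℝ) : Set (Fin n → ℝ) :=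
  {x | (∀ i, eval x (h i) = 0) ∧ (∀ j, 0 ≤ eval x (g j))}

/-- `I_{2k}(h) = h_1 ℝ[x]_{2k - deg h_1} + ⋯ + h_{m1} ℝ[x]_{2k - deg h_{m1}}`. -/
def IhSet {n m1 : ℕ} (h : Fin m1 → MvPolynomial (Fin n) ℝ) (k : ℕ) :
    Set (MvPolynomial (Fin n) ℝ) :=
  {p | ∃ q : Fin m1 → MvPolynomial (Fin n) ℝ,
        (∀ i, q i = 0 ∨ (h i).totalDegree + (q i).totalDegree ≤ 2 * k) ∧
        p = ∑ i, h i * q i}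

/-- `Q_k(g) = Σ_{n,2k} + g_1 Σ_{n,2k-deg g_1} + ⋯ + g_{m2} Σ_{n,2k-deg g_{m2}}`. -/
def QgSet {n m2 : ℕ} (g : Fin m2 → MvPolynomial (Fin n) ℝ) (k : ℕ) :
    Set (MvPolynomial (Fin n) ℝ) :=
  {p | ∃ σ₀ : MvPolynomial (Fin n) ℝ, ∃ σ : Fin m2 → MvPolynomial (Fin n) ℝ,
        IsSumSq σ₀ ∧ σ₀.totalDegree ≤ 2 * k ∧
        (∀ j, IsSumSq (σ j) ∧ (σ j = 0 ∨ (g j).totalDegree + (σ j).totalDegree ≤ 2 * k)) ∧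
        p = σ₀ + ∑ j, g j * σ j}

/-- The truncated preordering `I_{2k}(h) + Q_k(g)`. -/
def IQSet {n m1 m2 : ℕ} (h : Fin m1 → MvPolynomial (Fin n) ℝ)
    (g : Fin m2 → MvPolynomial (Fin n) ℝ) (k : ℕ) : Set (MvPolynomial (Fin n) ℝ) :=
  {p | ∃ a ∈ IhSet h k, ∃ b ∈ QgSet g k, p = a + b}

/-- `I(h) + Q(g)` is archimedean: `R - ‖x‖² ∈ I_{2k}(h) + Q_k(g)` for some `R > 0` and `k`. -/
def ArchQM {n m1 m2 : ℕ} (h : Fin m1 → MvPolynomial (Fin n) ℝ)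
    (g : Fin m2 → MvPolynomial (Fin n) ℝ) : Prop :=
  ∃ R : ℝ, 0 < R ∧ ∃ k : ℕ, (C R - ∑ i : Fin n, X i ^ 2) ∈ IQSet h g k

/-- The Riesz functional `L_z(p) = ∑_α p_α z_α` of a (truncated) moment sequence `z`. -/
def riesz {n : ℕ} (z : Exp n → ℝ) (p : MvPolynomial (Fin n) ℝ) : ℝ :=
  ∑ α ∈ p.support, coeff α p * z α

/-- `Φ_k(g)`: all localizing matrices `L_{g_j}^{(k)}(z) ⪰ 0` for `j = 0,1,…,m2`
(with `g_0 = 1`), expressed via the quadratic forms `L_z(g_j p²) ≥ 0`. -/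
def PhiSet {n m2 : ℕ} (g : Fin m2 → MvPolynomial (Fin n) ℝ) (k : ℕ) : Set (Exp n → ℝ) :=
  {z | (∀ p : MvPolynomial (Fin n) ℝ, (p ^ 2).totalDegree ≤ 2 * k → 0 ≤ riesz z (p ^ 2)) ∧
       (∀ j, ∀ p : MvPolynomial (Fin n) ℝ,
          (g j * p ^ 2).totalDegree ≤ 2 * k → 0 ≤ riesz z (g j * p ^ 2))}

/-- `E_k(h)`: all localizing matrices `L_{h_i}^{(k)}(z) = 0`, expressed via the
vanishing of the quadratic forms `L_z(h_i p²)`. -/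
def ESet {n m1 : ℕ} (h : Fin m1 → MvPolynomial (Fin n) ℝ) (k : ℕ) : Set (Exp n → ℝ) :=
  {z | ∀ i, ∀ p : MvPolynomial (Fin n) ℝ,
        (h i * p ^ 2).totalDegree ≤ 2 * k → riesz z (h i * p ^ 2) = 0}

/-- Restriction `z|_A` of a moment sequence to the indices in `A`. -/
def restrA {n : ℕ} (A : Finset (Exp n)) (z : Exp n → ℝ) : A → ℝ := fun α => z α

/-- `deg(A) = max { |α| : α ∈ A }`. -/
def degA {n : ℕ} (A : Finset (Exp n)) : ℕ := A.sup fun α => ∑ i, α i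

/-- The polynomial `∑_{α ∈ A} p_α x^α` associated to a coefficient vector `p : A → ℝ`. -/
def toPoly {n : ℕ} (A : Finset (Exp n)) (p : A → ℝ) : MvPolynomial (Fin n) ℝ :=
  ∑ α : A, monomial (Finsupp.equivFunOnFinite.symm (α : Exp n)) (p α)

/-- `c(λ) = c - λ_1 a_1 - ⋯ - λ_m a_m` (as coefficient vectors in `ℝ[x]_A`). -/
def cLam {n m : ℕ} {A : Finset (Exp n)} (c : A → ℝ) (a : Fin m → (A → ℝ))
    (lam : Fin m → ℝ) : A → ℝ :=
  c - ∑ i, lam i • a i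

/-- Feasibility of `w` for the `k`-th primal relaxation (4.3). -/
def RelaxFeas {n m1 m2 m : ℕ} (h : Fin m1 → MvPolynomial (Fin n) ℝ)
    (g : Fin m2 → MvPolynomial (Fin n) ℝ) (A : Finset (Exp n))
    (a : Fin m → (A → ℝ)) (b : Fin m → ℝ) (k : ℕ) (w : Exp n → ℝ) : Prop :=
  w ∈ PhiSet g k ∩ ESet h k ∧ ∀ i, pairA A (a i) (restrA A w) = b i

/-- `w` is a minimizer of the `k`-th primal relaxation (4.3). -/
def RelaxMin {n m1 m2 m : ℕ} (h : Fin m1 → MvPolynomial (Fin n) ℝ)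
    (g : Fin m2 → MvPolynomial (Fin n) ℝ) (A : Finset (Exp n)) (c : A → ℝ)
    (a : Fin m → (A → ℝ)) (b : Fin m → ℝ) (k : ℕ) (w : Exp n → ℝ) : Prop :=
  RelaxFeas h g A a b k w ∧
  ∀ w' : Exp n → ℝ, RelaxFeas h g A a b k w' →
    pairA A c (restrA A w) ≤ pairA A c (restrA A w')

/-- The exponents `α ∈ ℕ^n` with `|α| ≤ r`, as a finite set. -/
def expSet (n r : ℕ) : Finset (Exp n) :=
  (Fintype.piFinset fun _ : Fin n => Finset.range (r + 1)).filter fun α => ∑ i, α i ≤ r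

/-- The `r`-th order moment matrix `M_r(z)`, with rows and columns indexed by
exponents of degree `≤ r` and entries `z_{α+β}`. -/
def momMat {n : ℕ} (z : Exp n → ℝ) (r : ℕ) :
    Matrix (expSet n r) (expSet n r) ℝ :=
  fun α β => z ((α : Exp n) + (β : Exp n))

/-- The degree bound `d_K = max{1, ⌈deg h_i / 2⌉, ⌈deg g_j / 2⌉}`. -/
def dKnum {n m1 m2 : ℕ} (h : Fin m1 → MvPolynomial (Fin n) ℝ)
    (g : Fin m2 → MvPolynomial (Fin n) ℝ) : ℕ :=
  max 1 (max (Finset.univ.sup fun i => ((h i).totalDegree + 1) / 2)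
             (Finset.univ.sup fun j => ((g j).totalDegree + 1) / 2))

/-- The truncation `z|_{2t}` is flat: the localizing conditions hold at order `t`
and `rank M_{t - d_K}(z) = rank M_t(z)`. -/
def IsFlat {n m1 m2 : ℕ} (h : Fin m1 → MvPolynomial (Fin n) ℝ)
    (g : Fin m2 → MvPolynomial (Fin n) ℝ) (t : ℕ) (z : Exp n → ℝ) : Prop :=
  z ∈ PhiSet g t ∩ ESet h t ∧
  (momMat z (t - dKnum h g)).rank = (momMat z t).rank

/-- `u` is a KKT point of `min f(x) s.t. h(x) = 0, g(x) ≥ 0`. -/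
def IsKKT {n m1 m2 : ℕ} (h : Fin m1 → MvPolynomial (Fin n) ℝ)
    (g : Fin m2 → MvPolynomial (Fin n) ℝ) (f : MvPolynomial (Fin n) ℝ)
    (u : Fin n → ℝ) : Prop :=
  u ∈ semiK h g ∧ ∃ μ : Fin m1 → ℝ, ∃ ν : Fin m2 → ℝ,
    (∀ j, 0 ≤ ν j) ∧ (∀ j, ν j * eval u (g j) = 0) ∧
    ∀ l : Fin n, eval u (pderiv l f) =
      ∑ i, μ i * eval u (pderiv l (h i)) + ∑ j, ν j * eval u (pderiv l (g j))

/-!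
Putinar's Positivstellensatz, proved through Jacobi's representation theorem for archimedean
quadratic modules. Let `M = I(h) + Q(g)` and `M̄ = {p | p + ε ∈ M for all ε > 0}`; `M̄` is again an
archimedean quadratic module, and being closed it is also closed under products (for
`0 ≤ a, b ≤ 1` one gets `ab + 4⁻ᵐ ∈ M̄` by iterating `a ↦ 4a(1 - a)`). Suppose `p` is positive at
every character `ℝ[x] → ℝ` that is nonnegative on `M̄`. If `M̄ - p Σ` is proper, a maximal proper
quadratic module containing it is total and closed, and `x ↦ sup {r | x - r ∈ Q}` is such a
character with value `≤ 0` at `p`. Hence `s p - 1 ∈ M̄` for a sum of squares `s`, and, with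
`k - s ∈ M̄`, products let one lower any `c ≥ 0` with `p + c ∈ M̄` in steps of `1/k` until `p ∈ M̄`.

The characters of `ℝ[x]` are the point evaluations, and those nonnegative on `M` are the points of
`K`, which is compact. So a polynomial `p > 0` on `K` satisfies `p ≥ δ > 0` there, `p - δ ∈ M̄` and
`p ∈ M`. An interior point `p` of `P_A(K)` is positive on `K`, because `p - t q ∈ P_A(K)` for a
`q ∈ ℝ[x]_A` positive on `K` and small `t > 0`.
-/

theorem IsSumSq.map {S T F : Type*} [NonAssocSemiring S] [NonAssocSemiring T] [FunLike F S T]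
    [RingHomClass F S T] (f : F) {s : S} (hs : IsSumSq s) : IsSumSq (f s) := by
  induction hs with
  | zero => simp
  | sq_add a _ ih => simpa using ih.sq_add (f a)

section QuadraticModule

variable {R : Type*} [CommRing R]

structure IsQuadraticModule (M : Set R) : Prop where
  one_mem : (1 : R) ∈ M
  add_mem {a b : R} : a ∈ M → b ∈ M → a + b ∈ M
  sq_mul_mem (x : R) {a : R} : a ∈ M → x ^ 2 * a ∈ M

namespace IsQuadraticModule

variable {M : Set R} (hM : IsQuadraticModule M)
include hM

theorem sq_mem (x : R) : x ^ 2 ∈ M := by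
  simpa using hM.sq_mul_mem x hM.one_mem

theorem zero_mem : (0 : R) ∈ M := by
  simpa using hM.sq_mem 0

theorem isSumSq_mul_mem {s a : R} (hs : IsSumSq s) (ha : a ∈ M) : s * a ∈ M := by
  induction hs with
  | zero => simpa using hM.zero_mem
  | sq_add b _ ih => simpa [add_mul, sq] using hM.add_mem (hM.sq_mul_mem b ha) ih

theorem isSumSq_mem {s : R} (hs : IsSumSq s) : s ∈ M := by
  simpa using hM.isSumSq_mul_mem hs hM.one_mem

end IsQuadraticModule

def adjoinQM (M : Set R) (x : R) : Set R :=
  {y | ∃ q ∈ M, ∃ s, IsSumSq s ∧ y = q + x * s}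

theorem isQuadraticModule_adjoinQM {M : Set R} (hM : IsQuadraticModule M) (x : R) :
    IsQuadraticModule (adjoinQM M x) where
  one_mem := ⟨1, hM.one_mem, 0, .zero, by ring⟩
  add_mem := by
    rintro _ _ ⟨q₁, hq₁, s₁, hs₁, rfl⟩ ⟨q₂, hq₂, s₂, hs₂, rfl⟩
    exact ⟨q₁ + q₂, hM.add_mem hq₁ hq₂, s₁ + s₂, hs₁.add hs₂, by ring⟩
  sq_mul_mem := by
    rintro z _ ⟨q, hq, s, hs, rfl⟩
    exact ⟨z ^ 2 * q, hM.sq_mul_mem z hq, z * z * s, (IsSumSq.mul_self z).mul hs, by ring⟩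

theorem subset_adjoinQM (M : Set R) (x : R) : M ⊆ adjoinQM M x :=
  fun q hq => ⟨q, hq, 0, .zero, by ring⟩

theorem IsQuadraticModule.mem_adjoinQM_self {M : Set R} (hM : IsQuadraticModule M) (x : R) :
    x ∈ adjoinQM M x :=
  ⟨0, hM.zero_mem, 1, .one, by ring⟩

def IsMaximalQM (Q : Set R) : Prop :=
  Maximal (fun T : Set R => IsQuadraticModule T ∧ (-1 : R) ∉ T) Q

theorem IsQuadraticModule.exists_maximal {M : Set R} (hM : IsQuadraticModule M)
    (hM₁ : (-1 : R) ∉ M) :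
    ∃ Q, M ⊆ Q ∧ IsMaximalQM Q := by
  refine zorn_subset_nonempty _ ?_ M ⟨hM, hM₁⟩
  rintro c hc hchain ⟨T₀, hT₀⟩
  refine ⟨⋃₀ c, ⟨⟨⟨T₀, hT₀, (hc hT₀).1.one_mem⟩, ?_, ?_⟩, ?_⟩,
    fun T hT => Set.subset_sUnion_of_mem hT⟩
  · rintro a b ⟨T₁, hT₁, ha⟩ ⟨T₂, hT₂, hb⟩
    rcases hchain.total hT₁ hT₂ with h | h
    · exact ⟨T₂, hT₂, (hc hT₂).1.add_mem (h ha) hb⟩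
    · exact ⟨T₁, hT₁, (hc hT₁).1.add_mem ha (h hb)⟩
  · rintro z a ⟨T, hT, ha⟩
    exact ⟨T, hT, (hc hT).1.sq_mul_mem z ha⟩
  · rintro ⟨T, hT, h⟩
    exact (hc hT).2 h

namespace IsMaximalQM

variable {Q : Set R} (hQ : IsMaximalQM Q)
include hQ

theorem isQuadraticModule : IsQuadraticModule Q := hQ.prop.1

theorem neg_one_notMem : (-1 : R) ∉ Q := hQ.prop.2

theorem exists_neg_one_eq {x : R} (hx : x ∉ Q) : ∃ q ∈ Q, ∃ s, IsSumSq s ∧ -1 = q + x * s := by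
  by_contra! h
  have hle : adjoinQM Q x ⊆ Q :=
    hQ.2 ⟨isQuadraticModule_adjoinQM hQ.isQuadraticModule x,
      fun ⟨q, hq, s, hs, he⟩ => h q hq s hs he⟩ (subset_adjoinQM Q x)
  exact hx (hle (hQ.isQuadraticModule.mem_adjoinQM_self x))

end IsMaximalQM

variable [Algebra ℝ R]

def IsArchimedeanQM (M : Set R) : Prop :=
  ∀ x : R, ∃ N : ℝ, algebraMap ℝ R N - x ∈ M

def epsClosure (M : Set R) : Set R :=
  {x | ∀ ε : ℝ, 0 < ε → x + algebraMap ℝ R ε ∈ M}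

namespace IsQuadraticModule

variable {M : Set R} (hM : IsQuadraticModule M)
include hM

theorem algebraMap_mul_mem {c : ℝ} (hc : 0 ≤ c) {a : R} (ha : a ∈ M) :
    algebraMap ℝ R c * a ∈ M := by
  rw [← Real.sq_sqrt hc, map_pow]
  exact hM.sq_mul_mem _ ha

theorem algebraMap_mem {c : ℝ} (hc : 0 ≤ c) : algebraMap ℝ R c ∈ M := by
  simpa using hM.algebraMap_mul_mem hc hM.one_mem

theorem add_algebraMap_mem {a : R} (ha : a ∈ M) {c : ℝ} (hc : 0 ≤ c) :
    a + algebraMap ℝ R c ∈ M :=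
  hM.add_mem ha (hM.algebraMap_mem hc)

theorem mem_of_algebraMap_mul_mem {c : ℝ} (hc : 0 < c) {x : R}
    (h : algebraMap ℝ R c * x ∈ M) : x ∈ M := by
  simpa [← mul_assoc, ← map_mul, hc.ne'] using hM.algebraMap_mul_mem (inv_nonneg.2 hc.le) h

theorem nonneg_of_algebraMap_mem (hM₁ : (-1 : R) ∉ M) {c : ℝ}
    (h : algebraMap ℝ R c ∈ M) : 0 ≤ c := by
  by_contra! hc
  apply hM₁
  simpa [← map_mul, hc.ne] using hM.algebraMap_mul_mem (inv_nonneg.2 (neg_nonneg.2 hc.le)) h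

theorem sq_sub_sq_mem {l : ℝ} (hl : 0 < l) {a : R} (h₁ : algebraMap ℝ R l - a ∈ M)
    (h₂ : algebraMap ℝ R l + a ∈ M) : algebraMap ℝ R (l ^ 2) - a ^ 2 ∈ M := by
  apply hM.mem_of_algebraMap_mul_mem (by positivity : (0 : ℝ) < 2 * l)
  convert hM.add_mem (hM.sq_mul_mem (algebraMap ℝ R l - a) h₂)
    (hM.sq_mul_mem (algebraMap ℝ R l + a) h₁) using 1
  simp only [map_mul, map_pow, map_ofNat]
  ring

theorem sub_mem_of_sq_sub_sq_mem {l : ℝ} (hl : 0 < l) {a : R}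
    (h : algebraMap ℝ R (l ^ 2) - a ^ 2 ∈ M) : algebraMap ℝ R l - a ∈ M := by
  apply hM.mem_of_algebraMap_mul_mem (by positivity : (0 : ℝ) < 2 * l)
  convert hM.add_mem (hM.sq_mem (algebraMap ℝ R l - a)) h using 1
  simp only [map_mul, map_pow, map_ofNat]
  ring

def boundedSubalgebra : Subalgebra ℝ R where
  carrier := {x | ∃ N : ℝ, 0 < N ∧ algebraMap ℝ R N - x ∈ M ∧ algebraMap ℝ R N + x ∈ M}
  algebraMap_mem' c := by
    refine ⟨|c| + 1, by positivity, ?_, ?_⟩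
    · rw [← map_sub]; exact hM.algebraMap_mem (by cases abs_cases c <;> linarith)
    · rw [← map_add]; exact hM.algebraMap_mem (by cases abs_cases c <;> linarith)
  add_mem' := by
    rintro x y ⟨N₁, hN₁, hx₁, hx₂⟩ ⟨N₂, hN₂, hy₁, hy₂⟩
    refine ⟨N₁ + N₂, by positivity, ?_, ?_⟩
    · convert hM.add_mem hx₁ hy₁ using 1; rw [map_add]; ring
    · convert hM.add_mem hx₂ hy₂ using 1; rw [map_add]; ring
  mul_mem' := by
    rintro x y ⟨N₁, hN₁, hx₁, hx₂⟩ ⟨N₂, hN₂, hy₁, hy₂⟩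
    have hx := hM.sq_sub_sq_mem hN₁ hx₁ hx₂
    have hy := hM.sq_sub_sq_mem hN₂ hy₁ hy₂
    have hN := hM.algebraMap_mem (by positivity : 0 ≤ N₁ ^ 2 + N₂ ^ 2)
    refine ⟨N₁ ^ 2 + N₂ ^ 2, by positivity, ?_, ?_⟩ <;>
      apply hM.mem_of_algebraMap_mul_mem two_pos
    · convert hM.add_mem (hM.add_mem (hM.add_mem (hM.sq_mem (x - y)) hx) hy) hN using 1
      simp only [map_add, map_pow, map_ofNat]; ring
    · convert hM.add_mem (hM.add_mem (hM.add_mem (hM.sq_mem (x + y)) hx) hy) hN using 1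
      simp only [map_add, map_pow, map_ofNat]; ring

end IsQuadraticModule

namespace IsArchimedeanQM

variable {M : Set R}

theorem mono (harch : IsArchimedeanQM M) {M' : Set R} (h : M ⊆ M') : IsArchimedeanQM M' :=
  fun x => (harch x).imp fun _ hN => h hN

theorem exists_pos (harch : IsArchimedeanQM M) (hM : IsQuadraticModule M) (x : R) :
    ∃ N : ℝ, 0 < N ∧ algebraMap ℝ R N - x ∈ M := by
  obtain ⟨N, hN⟩ := harch x
  refine ⟨max N 1, by positivity, ?_⟩
  convert hM.add_algebraMap_mem hN (sub_nonneg.2 (le_max_left N 1)) using 1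
  rw [map_sub]
  ring

end IsArchimedeanQM

theorem IsQuadraticModule.isArchimedeanQM {M : Set R} (hM : IsQuadraticModule M)
    (h : hM.boundedSubalgebra = ⊤) : IsArchimedeanQM M := fun x => by
  obtain ⟨N, -, hN, -⟩ : x ∈ hM.boundedSubalgebra := h ▸ Algebra.mem_top
  exact ⟨N, hN⟩

theorem IsQuadraticModule.subset_epsClosure {M : Set R} (hM : IsQuadraticModule M) :
    M ⊆ epsClosure M :=
  fun _ hx _ hε => hM.add_algebraMap_mem hx hε.le

theorem epsClosure_epsClosure_subset (M : Set R) : epsClosure (epsClosure M) ⊆ epsClosure M := by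
  intro x hx ε hε
  convert hx (ε / 2) (half_pos hε) (ε / 2) (half_pos hε) using 1
  rw [add_assoc, ← map_add, add_halves]

theorem isQuadraticModule_epsClosure {M : Set R} (hM : IsQuadraticModule M)
    (harch : IsArchimedeanQM M) : IsQuadraticModule (epsClosure M) where
  one_mem := hM.subset_epsClosure hM.one_mem
  add_mem {a b} ha hb ε hε := by
    convert hM.add_mem (ha (ε / 2) (half_pos hε)) (hb (ε / 2) (half_pos hε)) using 1
    conv_lhs => rw [← add_halves ε, map_add]
    ring
  sq_mul_mem z a ha ε hε := by
    obtain ⟨N, hN, hz⟩ := harch.exists_pos hM (z ^ 2)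
    have hδ : 0 < ε / N := div_pos hε hN
    convert hM.add_mem (hM.sq_mul_mem z (ha _ hδ)) (hM.algebraMap_mul_mem hδ.le hz) using 1
    rw [mul_sub, ← map_mul, div_mul_cancel₀ ε hN.ne']
    ring

namespace IsQuadraticModule

variable {M : Set R} (hM : IsQuadraticModule M)
include hM

theorem mul_add_inv_four_pow_mem {a b : R} (ha : a ∈ M) (ha' : 1 - a ∈ M) (hb : b ∈ M)
    (hb' : 1 - b ∈ M) (m : ℕ) : a * b + algebraMap ℝ R (4⁻¹ ^ m) ∈ M := by
  -- Base case: `4 (a b + 1) = (a + b)² + (1 - (a - b)²) + 3`. The step applies the hypothesis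
  -- to `4 a (1 - a) ∈ [0, 1]`, as `4 (a b + c / 4) = 4 a² b + (4 a (1 - a) b + c)`.
  induction m generalizing a with
  | zero =>
    have hab : algebraMap ℝ R (1 ^ 2) - (a - b) ^ 2 ∈ M :=
      hM.sq_sub_sq_mem one_pos (by convert hM.add_mem ha' hb using 1; rw [map_one]; ring)
        (by convert hM.add_mem ha hb' using 1; rw [map_one]; ring)
    apply hM.mem_of_algebraMap_mul_mem four_pos
    convert hM.add_algebraMap_mem (hM.add_mem (hM.sq_mem (a + b)) hab)
      (by norm_num : (0 : ℝ) ≤ 3) using 1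
    simp only [pow_zero, one_pow, map_one, map_ofNat]
    ring
  | succ m ih =>
    have h₁ : algebraMap ℝ R 4 * (a * (1 - a)) ∈ M := by
      refine hM.algebraMap_mul_mem (by norm_num) ?_
      convert hM.add_mem (hM.sq_mul_mem (1 - a) ha) (hM.sq_mul_mem a ha') using 1
      ring
    have h₂ : 1 - algebraMap ℝ R 4 * (a * (1 - a)) ∈ M := by
      convert hM.sq_mem (1 - 2 * a) using 1
      simp only [map_ofNat]
      ring
    have h₄ : algebraMap ℝ R 4 * algebraMap ℝ R 4⁻¹ = 1 := by
      rw [← map_mul]; norm_num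
    apply hM.mem_of_algebraMap_mul_mem four_pos
    convert hM.add_mem (hM.algebraMap_mul_mem (by norm_num : (0 : ℝ) ≤ 4)
      (hM.sq_mul_mem a hb)) (ih h₁ h₂) using 1
    rw [pow_succ, map_mul]
    linear_combination algebraMap ℝ R (4⁻¹ ^ m) * h₄

theorem mul_mem_of_unit_interval (hcl : epsClosure M ⊆ M) {a b : R} (ha : a ∈ M)
    (ha' : 1 - a ∈ M) (hb : b ∈ M) (hb' : 1 - b ∈ M) : a * b ∈ M := by
  refine hcl fun ε hε => ?_
  obtain ⟨m, hm⟩ := exists_pow_lt_of_lt_one hε (by norm_num : (4⁻¹ : ℝ) < 1)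
  convert hM.add_algebraMap_mem (hM.mul_add_inv_four_pow_mem ha ha' hb hb' m)
    (sub_nonneg.2 hm.le) using 1
  rw [map_sub]
  ring

theorem mul_mem (harch : IsArchimedeanQM M) (hcl : epsClosure M ⊆ M) {a b : R} (ha : a ∈ M)
    (hb : b ∈ M) : a * b ∈ M := by
  have rescale : ∀ x ∈ M, ∃ c : ℝ, 0 < c ∧ algebraMap ℝ R c * x ∈ M ∧
      1 - algebraMap ℝ R c * x ∈ M := by
    intro x hx
    obtain ⟨N, hN, hNx⟩ := harch.exists_pos hM x
    refine ⟨N⁻¹, inv_pos.2 hN, hM.algebraMap_mul_mem (inv_nonneg.2 hN.le) hx, ?_⟩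
    convert hM.algebraMap_mul_mem (inv_nonneg.2 hN.le) hNx using 1
    rw [mul_sub, ← map_mul, inv_mul_cancel₀ hN.ne', map_one]
  obtain ⟨α, hα, ha₁, ha₂⟩ := rescale a ha
  obtain ⟨β, hβ, hb₁, hb₂⟩ := rescale b hb
  apply hM.mem_of_algebraMap_mul_mem (mul_pos hα hβ)
  convert hM.mul_mem_of_unit_interval hcl ha₁ ha₂ hb₁ hb₂ using 1
  rw [map_mul]
  ring

theorem mem_of_mul_sub_one_mem (harch : IsArchimedeanQM M) (hcl : epsClosure M ⊆ M) {s p : R}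
    (hs : s ∈ M) (hsp : s * p - 1 ∈ M) : p ∈ M := by
  obtain ⟨k, hk, hks⟩ := harch.exists_pos hM s
  obtain ⟨l, -, hl⟩ := harch.exists_pos hM (-p)
  rw [sub_neg_eq_add] at hl
  -- `k (p + c) = (k - s) (p + c + k⁻¹) + (s p - 1) + (c + k⁻¹) s`
  have step : ∀ c : ℝ, 0 ≤ c → p + algebraMap ℝ R (c + k⁻¹) ∈ M →
      p + algebraMap ℝ R c ∈ M := by
    intro c hc h
    apply hM.mem_of_algebraMap_mul_mem hk
    convert hM.add_mem (hM.add_mem (hM.mul_mem harch hcl hks h) hsp)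
      (hM.algebraMap_mul_mem (by positivity : 0 ≤ c + k⁻¹) hs) using 1
    have hkk : algebraMap ℝ R k * algebraMap ℝ R k⁻¹ = 1 := by
      rw [← map_mul, mul_inv_cancel₀ hk.ne', map_one]
    rw [map_add]
    linear_combination -hkk
  have descent : ∀ j : ℕ, ∀ c : ℝ, 0 ≤ c → l ≤ c + j * k⁻¹ → p + algebraMap ℝ R c ∈ M := by
    intro j
    induction j with
    | zero =>
      intro c _ hlc
      convert hM.add_algebraMap_mem hl (by simpa using hlc : 0 ≤ c - l) using 1
      rw [map_sub]
      ring
    | succ j ih =>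
      intro c hc hlc
      refine step c hc (ih _ (by positivity) ?_)
      push_cast at hlc
      linarith
  obtain ⟨j, hj⟩ := exists_nat_ge (l * k)
  simpa using descent j 0 le_rfl (by
    rw [zero_add, ← div_eq_mul_inv, le_div_iff₀ hk]
    exact hj)

theorem mul_mem_of_neg_mem (y : R) {x : R} (hx : x ∈ M) (hx' : -x ∈ M) : y * x ∈ M := by
  apply hM.mem_of_algebraMap_mul_mem four_pos
  convert hM.add_mem (hM.sq_mul_mem (y + 1) hx) (hM.sq_mul_mem (y - 1) hx') using 1
  simp only [map_ofNat]
  ring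

def support : Ideal R where
  carrier := {x | x ∈ M ∧ -x ∈ M}
  zero_mem' := ⟨hM.zero_mem, by simpa using hM.zero_mem⟩
  add_mem' ha hb := ⟨hM.add_mem ha.1 hb.1, by rw [neg_add]; exact hM.add_mem ha.2 hb.2⟩
  smul_mem' y _ hx := ⟨hM.mul_mem_of_neg_mem y hx.1 hx.2,
    by simpa using hM.mul_mem_of_neg_mem y hx.2 (by simpa using hx.1)⟩

end IsQuadraticModule

def qmValue (Q : Set R) (x : R) : ℝ :=
  sSup {r : ℝ | x - algebraMap ℝ R r ∈ Q}

namespace IsMaximalQM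

variable {Q : Set R} (hQ : IsMaximalQM Q)
include hQ

theorem mem_or_neg_mem (x : R) : x ∈ Q ∨ -x ∈ Q := by
  have hQ' := hQ.isQuadraticModule
  by_contra! h
  obtain ⟨q₁, hq₁, s₁, hs₁, he₁⟩ := hQ.exists_neg_one_eq h.1
  obtain ⟨q₂, hq₂, s₂, hs₂, he₂⟩ := hQ.exists_neg_one_eq h.2
  have hs : -(s₁ + s₂) ∈ Q := by
    convert hQ'.add_mem (hQ'.isSumSq_mul_mem hs₂ hq₁) (hQ'.isSumSq_mul_mem hs₁ hq₂) using 1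
    linear_combination s₂ * he₁ + s₁ * he₂
  have hs₁_supp : s₁ ∈ hQ'.support :=
    ⟨hQ'.isSumSq_mem hs₁, by simpa using hQ'.add_mem hs (hQ'.isSumSq_mem hs₂)⟩
  apply hQ.neg_one_notMem
  rw [he₁]
  exact hQ'.add_mem hq₁ (hQ'.support.mul_mem_left x hs₁_supp).1

theorem epsClosure_subset (harch : IsArchimedeanQM Q) : epsClosure Q ⊆ Q := by
  have hQ' := hQ.isQuadraticModule
  intro x hx
  by_contra hxQ
  obtain ⟨q, hq, s, hs, he⟩ := hQ.exists_neg_one_eq hxQ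
  obtain ⟨N, hN, hNs⟩ := harch.exists_pos hQ' s
  have hε : 0 < (2 * N)⁻¹ := by positivity
  -- `s (x + ε) + q + ε (N - s) = -1 + ε N = -1/2` for `ε = 1 / (2N)`
  have h : algebraMap ℝ R (-2⁻¹) ∈ Q := by
    convert hQ'.add_mem (hQ'.add_mem (hQ'.isSumSq_mul_mem hs (hx _ hε)) hq)
      (hQ'.algebraMap_mul_mem hε.le hNs) using 1
    have : algebraMap ℝ R (-2⁻¹) = -1 + algebraMap ℝ R (2 * N)⁻¹ * algebraMap ℝ R N := by
      rw [← map_mul, ← map_one (algebraMap ℝ R), ← map_neg, ← map_add]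
      congr 1
      field_simp
      norm_num
    rw [this, he]
    ring
  linarith [hQ'.nonneg_of_algebraMap_mem hQ.neg_one_notMem h]

variable (harch : IsArchimedeanQM Q)
include harch

theorem le_qmValue {x : R} {r : ℝ} (h : x - algebraMap ℝ R r ∈ Q) : r ≤ qmValue Q x := by
  have hQ' := hQ.isQuadraticModule
  refine le_csSup ?_ h
  obtain ⟨N, -, hN⟩ := harch.exists_pos hQ' x
  refine ⟨N, fun r' hr' => ?_⟩
  have := hQ'.nonneg_of_algebraMap_mem hQ.neg_one_notMem (c := N - r') (by
    convert hQ'.add_mem hr' hN using 1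
    rw [map_sub]
    ring)
  linarith

theorem sub_qmValue_mem (x : R) : x - algebraMap ℝ R (qmValue Q x) ∈ Q := by
  have hQ' := hQ.isQuadraticModule
  refine hQ.epsClosure_subset harch fun ε hε => ?_
  obtain ⟨N, -, hN⟩ := harch.exists_pos hQ' (-x)
  obtain ⟨r, hr, hlt⟩ := exists_lt_of_lt_csSup (s := {r : ℝ | x - algebraMap ℝ R r ∈ Q})
    ⟨-N, by simpa [add_comm] using hN⟩ (sub_lt_self (qmValue Q x) hε)
  convert hQ'.add_algebraMap_mem hr (by linarith : 0 ≤ r - qmValue Q x + ε) using 1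
  simp only [map_add, map_sub]
  ring

theorem qmValue_sub_mem (x : R) : algebraMap ℝ R (qmValue Q x) - x ∈ Q := by
  refine hQ.epsClosure_subset harch fun ε hε => ?_
  have hnot : x - algebraMap ℝ R (qmValue Q x + ε) ∉ Q :=
    fun h => by linarith [hQ.le_qmValue harch h]
  convert (hQ.mem_or_neg_mem _).resolve_left hnot using 1
  rw [map_add]
  ring

theorem qmValue_eq {x : R} {α : ℝ} (h : x - algebraMap ℝ R α ∈ hQ.isQuadraticModule.support) :
    qmValue Q x = α := by
  have hQ' := hQ.isQuadraticModule
  refine le_antisymm ?_ (hQ.le_qmValue harch h.1)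
  have := hQ'.nonneg_of_algebraMap_mem hQ.neg_one_notMem (c := α - qmValue Q x) (by
    convert hQ'.add_mem h.2 (hQ.sub_qmValue_mem harch x) using 1
    rw [map_sub]
    ring)
  linarith

theorem sub_qmValue_mem_support (x : R) :
    x - algebraMap ℝ R (qmValue Q x) ∈ hQ.isQuadraticModule.support :=
  ⟨hQ.sub_qmValue_mem harch x, by simpa using hQ.qmValue_sub_mem harch x⟩

theorem exists_algHom_nonneg : ∃ φ : R →ₐ[ℝ] ℝ, ∀ q ∈ Q, 0 ≤ φ q := by
  set I := hQ.isQuadraticModule.support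
  have hI : ∀ x, x - algebraMap ℝ R (qmValue Q x) ∈ I := hQ.sub_qmValue_mem_support harch
  let φ : R →ₐ[ℝ] ℝ :=
    { toFun := qmValue Q
      map_one' := hQ.qmValue_eq harch (by simp)
      map_mul' x y := hQ.qmValue_eq harch (by
        convert I.add_mem (I.mul_mem_left x (hI y))
          (I.mul_mem_left (algebraMap ℝ R (qmValue Q y)) (hI x)) using 1
        rw [map_mul]
        ring)
      map_zero' := hQ.qmValue_eq harch (by simp)
      map_add' x y := hQ.qmValue_eq harch (by
        convert I.add_mem (hI x) (hI y) using 1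
        rw [map_add]
        ring)
      commutes' c := hQ.qmValue_eq harch (by simp) }
  exact ⟨φ, fun q hq => hQ.le_qmValue harch (r := 0) (by simpa using hq)⟩

end IsMaximalQM

theorem IsQuadraticModule.mem_of_forall_algHom_pos {S : Set R} (hS : IsQuadraticModule S)
    (harch : IsArchimedeanQM S) (hcl : epsClosure S ⊆ S) {p : R}
    (hp : ∀ φ : R →ₐ[ℝ] ℝ, (∀ q ∈ S, 0 ≤ φ q) → 0 < φ p) : p ∈ S := by
  by_cases h : (-1 : R) ∈ adjoinQM S (-p)
  · obtain ⟨q, hq, s, hs, he⟩ := h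
    exact hS.mem_of_mul_sub_one_mem harch hcl (hS.isSumSq_mem hs)
      (by convert hq using 1; linear_combination he)
  · obtain ⟨Q, hSQ, hQ⟩ := (isQuadraticModule_adjoinQM hS (-p)).exists_maximal h
    obtain ⟨φ, hφ⟩ := hQ.exists_algHom_nonneg (harch.mono ((subset_adjoinQM S (-p)).trans hSQ))
    have h₁ := hφ (-p) (hSQ (hS.mem_adjoinQM_self (-p)))
    have h₂ := hp φ fun q hq => hφ q (hSQ (subset_adjoinQM S (-p) hq))
    rw [map_neg] at h₁
    linarith

theorem IsQuadraticModule.mem_epsClosure_of_forall_algHom_nonneg {M : Set R}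
    (hM : IsQuadraticModule M) (harch : IsArchimedeanQM M) {p : R}
    (hp : ∀ φ : R →ₐ[ℝ] ℝ, (∀ q ∈ M, 0 ≤ φ q) → 0 ≤ φ p) : p ∈ epsClosure M := by
  refine epsClosure_epsClosure_subset M fun ε hε => ?_
  refine (isQuadraticModule_epsClosure hM harch).mem_of_forall_algHom_pos
    (harch.mono hM.subset_epsClosure) (epsClosure_epsClosure_subset M) fun φ hφ => ?_
  rw [map_add, AlgHom.commutes, Algebra.algebraMap_self, RingHom.id_apply]
  linarith [hp φ fun q hq => hφ q (hM.subset_epsClosure hq)]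

end QuadraticModule

section Polynomial

theorem eval_toPoly {n : ℕ} {A : Finset (Exp n)} (p : A → ℝ) (u : Fin n → ℝ) :
    eval u (toPoly A p) = evalA A p u := by
  simp only [toPoly, evalA, monoEval, map_sum, eval_monomial,
    Finsupp.prod_fintype _ _ (fun i => pow_zero _), Finsupp.coe_equivFunOnFinite_symm]

theorem pos_of_mem_interior_PAcone {n : ℕ} {A : Finset (Exp n)} {K : Set (Fin n → ℝ)}
    (hfull : KFull A K) {p : A → ℝ} (hp : p ∈ interior (PAcone A K)) (u : Fin n → ℝ)
    (hu : u ∈ K) : 0 < evalA A p u := by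
  obtain ⟨q, hq⟩ := hfull
  have hnear : ∀ᶠ t in nhds (0 : ℝ), p - t • q ∈ PAcone A K := by
    have hcont : Continuous fun t : ℝ => p - t • q := by fun_prop
    have hp₀ : (fun t : ℝ => p - t • q) 0 ∈ interior (PAcone A K) := by simpa using hp
    exact Filter.mem_of_superset (hcont.continuousAt.preimage_mem_nhds
      (isOpen_interior.mem_nhds hp₀)) fun _ h => interior_subset (s := PAcone A K) h
  obtain ⟨t, htK, ht⟩ :=
    ((hnear.filter_mono nhdsWithin_le_nhds).and (self_mem_nhdsWithin (s := Set.Ioi 0))).exists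
  have hlin : evalA A (p - t • q) u = evalA A p u - t * evalA A q u := by
    simp only [evalA, Pi.sub_apply, Pi.smul_apply, smul_eq_mul, sub_mul, Finset.sum_sub_distrib,
      mul_assoc, ← Finset.mul_sum]
  have := htK u hu
  rw [hlin] at this
  nlinarith [hq u hu, show (0 : ℝ) < t from ht]

def WithinDegree {σ S : Type*} [CommSemiring S] (d N : ℕ) (q : MvPolynomial σ S) : Prop :=
  q = 0 ∨ d + q.totalDegree ≤ N

namespace WithinDegree

variable {σ S : Type*} [CommSemiring S] {d : ℕ}

theorem mono {N N' : ℕ} {q : MvPolynomial σ S} (hq : WithinDegree d N q) (hN : N ≤ N') :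
    WithinDegree d N' q :=
  hq.imp_right (le_trans · hN)

theorem add {N : ℕ} {q₁ q₂ : MvPolynomial σ S} (h₁ : WithinDegree d N q₁)
    (h₂ : WithinDegree d N q₂) : WithinDegree d N (q₁ + q₂) := by
  rcases h₁ with rfl | h₁
  · simpa using h₂
  rcases h₂ with rfl | h₂
  · simpa [WithinDegree] using Or.inr h₁
  have := totalDegree_add q₁ q₂
  right
  omega

theorem sq_mul {k : ℕ} (z : MvPolynomial σ S) {q : MvPolynomial σ S}
    (hq : WithinDegree d (2 * k) q) : WithinDegree d (2 * (k + z.totalDegree)) (z ^ 2 * q) := by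
  rcases hq with rfl | hq
  · simp [WithinDegree]
  have := totalDegree_mul (z ^ 2) q
  have := totalDegree_pow z 2
  right
  omega

end WithinDegree

variable {n m1 m2 : ℕ} (h : Fin m1 → MvPolynomial (Fin n) ℝ)
  (g : Fin m2 → MvPolynomial (Fin n) ℝ)

theorem IhSet.mono {k k' : ℕ} (hk : k ≤ k') : IhSet h k ⊆ IhSet h k' := by
  rintro _ ⟨q, hq, rfl⟩
  exact ⟨q, fun i => WithinDegree.mono (hq i) (by omega), rfl⟩

theorem IhSet.zero_mem (k : ℕ) : 0 ∈ IhSet h k :=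
  ⟨0, fun _ => Or.inl rfl, by simp⟩

theorem IhSet.add_mem {k : ℕ} {p₁ p₂ : MvPolynomial (Fin n) ℝ} (h₁ : p₁ ∈ IhSet h k)
    (h₂ : p₂ ∈ IhSet h k) : p₁ + p₂ ∈ IhSet h k := by
  obtain ⟨q₁, hq₁, rfl⟩ := h₁
  obtain ⟨q₂, hq₂, rfl⟩ := h₂
  exact ⟨q₁ + q₂, fun i => WithinDegree.add (hq₁ i) (hq₂ i),
    by simp [mul_add, Finset.sum_add_distrib]⟩

theorem IhSet.sq_mul_mem {k : ℕ} (z : MvPolynomial (Fin n) ℝ) {p : MvPolynomial (Fin n) ℝ}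
    (hp : p ∈ IhSet h k) : z ^ 2 * p ∈ IhSet h (k + z.totalDegree) := by
  obtain ⟨q, hq, rfl⟩ := hp
  refine ⟨fun i => z ^ 2 * q i, fun i => WithinDegree.sq_mul z (hq i), ?_⟩
  rw [Finset.mul_sum]
  exact Finset.sum_congr rfl fun i _ => by ring

theorem QgSet.mono {k k' : ℕ} (hk : k ≤ k') : QgSet g k ⊆ QgSet g k' := by
  rintro _ ⟨σ₀, σ, hσ₀, hd₀, hσ, rfl⟩
  exact ⟨σ₀, σ, hσ₀, hd₀.trans (by omega),
    fun j => ⟨(hσ j).1, WithinDegree.mono (hσ j).2 (by omega)⟩, rfl⟩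

theorem QgSet.add_mem {k : ℕ} {p₁ p₂ : MvPolynomial (Fin n) ℝ} (h₁ : p₁ ∈ QgSet g k)
    (h₂ : p₂ ∈ QgSet g k) : p₁ + p₂ ∈ QgSet g k := by
  obtain ⟨σ₀, σ, hσ₀, hd₀, hσ, rfl⟩ := h₁
  obtain ⟨τ₀, τ, hτ₀, he₀, hτ, rfl⟩ := h₂
  refine ⟨σ₀ + τ₀, σ + τ, hσ₀.add hτ₀, (totalDegree_add _ _).trans (max_le hd₀ he₀),
    fun j => ⟨(hσ j).1.add (hτ j).1, WithinDegree.add (hσ j).2 (hτ j).2⟩, ?_⟩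
  simp only [Pi.add_apply, mul_add, Finset.sum_add_distrib]
  ring

theorem QgSet.sq_mul_mem {k : ℕ} (z : MvPolynomial (Fin n) ℝ) {p : MvPolynomial (Fin n) ℝ}
    (hp : p ∈ QgSet g k) : z ^ 2 * p ∈ QgSet g (k + z.totalDegree) := by
  obtain ⟨σ₀, σ, hσ₀, hd₀, hσ, rfl⟩ := hp
  have hsq : ∀ {s : MvPolynomial (Fin n) ℝ}, IsSumSq s → IsSumSq (z ^ 2 * s) :=
    fun hs => by simpa [sq] using (IsSumSq.mul_self z).mul hs
  refine ⟨z ^ 2 * σ₀, fun j => z ^ 2 * σ j, hsq hσ₀, ?_,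
    fun j => ⟨hsq (hσ j).1, WithinDegree.sq_mul z (hσ j).2⟩, ?_⟩
  · have := totalDegree_mul (z ^ 2) σ₀
    have := totalDegree_pow z 2
    omega
  · rw [mul_add, Finset.mul_sum]
    exact congrArg _ (Finset.sum_congr rfl fun j _ => by ring)

theorem IQSet.mono {k k' : ℕ} (hk : k ≤ k') : IQSet h g k ⊆ IQSet h g k' := by
  rintro _ ⟨a, ha, b, hb, rfl⟩
  exact ⟨a, IhSet.mono h hk ha, b, QgSet.mono g hk hb, rfl⟩

theorem IQSet.add_mem {k : ℕ} {p₁ p₂ : MvPolynomial (Fin n) ℝ} (h₁ : p₁ ∈ IQSet h g k)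
    (h₂ : p₂ ∈ IQSet h g k) : p₁ + p₂ ∈ IQSet h g k := by
  obtain ⟨a₁, ha₁, b₁, hb₁, rfl⟩ := h₁
  obtain ⟨a₂, ha₂, b₂, hb₂, rfl⟩ := h₂
  exact ⟨a₁ + a₂, IhSet.add_mem h ha₁ ha₂, b₁ + b₂, QgSet.add_mem g hb₁ hb₂, by ring⟩

theorem IQSet.sq_mul_mem {k : ℕ} (z : MvPolynomial (Fin n) ℝ) {p : MvPolynomial (Fin n) ℝ}
    (hp : p ∈ IQSet h g k) : z ^ 2 * p ∈ IQSet h g (k + z.totalDegree) := by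
  obtain ⟨a, ha, b, hb, rfl⟩ := hp
  exact ⟨_, IhSet.sq_mul_mem h z ha, _, QgSet.sq_mul_mem g z hb, by ring⟩

theorem IQSet.eval_nonneg {k : ℕ} {p : MvPolynomial (Fin n) ℝ} (hp : p ∈ IQSet h g k)
    {u : Fin n → ℝ} (hu : u ∈ semiK h g) : 0 ≤ eval u p := by
  obtain ⟨_, ⟨q, -, rfl⟩, _, ⟨σ₀, σ, hσ₀, -, hσ, rfl⟩, rfl⟩ := hp
  simp only [map_add, map_sum, map_mul, hu.1, zero_mul, Finset.sum_const_zero, zero_add]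
  exact add_nonneg (hσ₀.map (eval u)).nonneg (Finset.sum_nonneg fun j _ =>
    mul_nonneg (hu.2 j) ((hσ j).1.map (eval u)).nonneg)

def IQUnion : Set (MvPolynomial (Fin n) ℝ) := {p | ∃ k, p ∈ IQSet h g k}

theorem isQuadraticModule_IQUnion : IsQuadraticModule (IQUnion h g) where
  one_mem := ⟨0, 0, IhSet.zero_mem h 0, 1, ⟨1, 0, .one, by simp, fun _ => ⟨.zero, Or.inl rfl⟩,
    by simp⟩, by ring⟩
  add_mem := by
    rintro a b ⟨k₁, ha⟩ ⟨k₂, hb⟩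
    exact ⟨max k₁ k₂, IQSet.add_mem h g (IQSet.mono h g (le_max_left _ _) ha)
      (IQSet.mono h g (le_max_right _ _) hb)⟩
  sq_mul_mem := by
    rintro z a ⟨k, ha⟩
    exact ⟨k + z.totalDegree, IQSet.sq_mul_mem h g z ha⟩

theorem h_mul_mem_IQUnion (i : Fin m1) (q : MvPolynomial (Fin n) ℝ) : h i * q ∈ IQUnion h g := by
  classical
  refine ⟨(h i).totalDegree + q.totalDegree, h i * q, ⟨Pi.single i q, fun i' => ?_, ?_⟩,
    0, ⟨0, 0, .zero, by simp, fun _ => ⟨.zero, Or.inl rfl⟩, by simp⟩, by ring⟩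
  · rcases eq_or_ne i' i with rfl | hi
    · right
      simp only [Pi.single_eq_same]
      omega
    · simp [hi]
  · simp [Pi.single_apply]

theorem g_mem_IQUnion (j : Fin m2) : g j ∈ IQUnion h g := by
  classical
  refine ⟨(g j).totalDegree, 0, IhSet.zero_mem h _, g j,
    ⟨0, Pi.single j 1, .zero, by simp, fun j' => ?_, by simp [Pi.single_apply]⟩, by ring⟩
  rcases eq_or_ne j' j with rfl | hj
  · refine ⟨by simp, Or.inr ?_⟩
    simp only [Pi.single_eq_same, totalDegree_one]
    omega
  · simp [Pi.single_eq_of_ne hj]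

theorem isArchimedeanQM_IQUnion (harch : ArchQM h g) : IsArchimedeanQM (IQUnion h g) := by
  have hM := isQuadraticModule_IQUnion h g
  obtain ⟨R₀, hR₀, k, hk⟩ := harch
  have hl : 0 < √R₀ := Real.sqrt_pos.2 hR₀
  refine hM.isArchimedeanQM (eq_top_iff.2 ?_)
  rw [← MvPolynomial.adjoin_range_X]
  refine Algebra.adjoin_le ?_
  rintro _ ⟨i, rfl⟩
  have hXi : ∀ a, a ^ 2 = X i ^ 2 → algebraMap ℝ _ (√R₀ ^ 2) - a ^ 2 ∈ IQUnion h g := by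
    intro a ha
    rw [Real.sq_sqrt hR₀.le, algebraMap_eq, ha]
    convert hM.add_mem ⟨k, hk⟩ (hM.isSumSq_mem (IsSumSq.sum_sq (univ.erase i) X)) using 1
    rw [← Finset.sum_erase_add _ _ (Finset.mem_univ i)]
    ring
  refine ⟨√R₀, hl, hM.sub_mem_of_sq_sub_sq_mem hl (hXi _ rfl), ?_⟩
  simpa using hM.sub_mem_of_sq_sub_sq_mem hl (hXi _ (neg_sq _))

theorem exists_eq_eval_of_algHom_nonneg (φ : MvPolynomial (Fin n) ℝ →ₐ[ℝ] ℝ)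
    (hφ : ∀ q ∈ IQUnion h g, 0 ≤ φ q) : ∃ u ∈ semiK h g, ∀ f, φ f = eval u f := by
  have hφ_eval : ∀ f, φ f = eval (fun i => φ (X i)) f := fun f =>
    DFunLike.congr_fun (aeval_unique φ) f
  refine ⟨_, ⟨fun i => ?_, fun j => ?_⟩, hφ_eval⟩
  · have h₁ := hφ _ (h_mul_mem_IQUnion h g i 1)
    have h₂ := hφ _ (h_mul_mem_IQUnion h g i (-1))
    rw [mul_one] at h₁
    rw [mul_neg_one, map_neg] at h₂
    rw [← hφ_eval]
    linarith
  · rw [← hφ_eval]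
    exact hφ _ (g_mem_IQUnion h g j)

theorem isCompact_semiK (harch : ArchQM h g) : IsCompact (semiK h g) := by
  obtain ⟨R₀, -, k, hk⟩ := harch
  have hclosed : IsClosed (semiK h g) := by
    simp only [semiK, Set.ofPred_and, Set.ofPred_forall]
    exact (isClosed_iInter fun i => isClosed_eq (continuous_eval _) continuous_const).inter
      (isClosed_iInter fun j => isClosed_le continuous_const (continuous_eval _))
  refine (isCompact_univ_pi fun _ => isCompact_Icc (a := -√R₀) (b := √R₀)).of_isClosed_subset
    hclosed fun u hu i _ => abs_le.1 (Real.abs_le_sqrt ?_)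
  have hR := IQSet.eval_nonneg h g hk hu
  simp only [map_sub, map_sum, map_pow, eval_C, eval_X] at hR
  linarith [Finset.single_le_sum (fun j _ => sq_nonneg (u j)) (Finset.mem_univ i)]

theorem exists_mem_IQSet_of_pos (harch : ArchQM h g) {f : MvPolynomial (Fin n) ℝ}
    (hf : ∀ u ∈ semiK h g, 0 < eval u f) : ∃ k, f ∈ IQSet h g k := by
  obtain ⟨δ, hδ, hδf⟩ :=
    (isCompact_semiK h g harch).exists_forall_le' (continuous_eval f).continuousOn hf
  have hmem := (isQuadraticModule_IQUnion h g).mem_epsClosure_of_forall_algHom_nonneg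
    (isArchimedeanQM_IQUnion h g harch) (p := f - C δ) fun φ hφ => by
      obtain ⟨u, hu, hφu⟩ := exists_eq_eval_of_algHom_nonneg h g φ hφ
      rw [hφu, map_sub, eval_C, sub_nonneg]
      exact hδf u hu
  simpa [IQUnion, algebraMap_eq] using hmem δ hδ

end Polynomial

theorem statement_7_general {n m1 m2 : ℕ}
    (h : Fin m1 → MvPolynomial (Fin n) ℝ) (g : Fin m2 → MvPolynomial (Fin n) ℝ)
    {A : Finset (Exp n)}
    (hfull : KFull A (semiK h g)) (harch : ArchQM h g) :
    (∀ p ∈ interior (PAcone A (semiK h g)), ∃ k : ℕ, toPoly A p ∈ IQSet h g k) ∧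
    (∀ p : A → ℝ, (∃ k : ℕ, toPoly A p ∈ IQSet h g k) → p ∈ PAcone A (semiK h g)) := by
  refine ⟨fun p hp => exists_mem_IQSet_of_pos h g harch fun u hu => ?_,
    fun p ⟨k, hk⟩ u hu => ?_⟩
  · rw [eval_toPoly]
    exact pos_of_mem_interior_PAcone hfull hp u hu
  · rw [← eval_toPoly]
    exact IQSet.eval_nonneg h g hk hu

/-- If `ℝ[x]_A` is `K`-full and `I(h)+Q(g)` is archimedean, then
`int(P_A(K)) ⊆ ⋃_k Q_A^k(K) ⊆ P_A(K)`. -/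
theorem statement_7 {n m1 m2 : ℕ} (hn : 1 ≤ n)
    (h : Fin m1 → MvPolynomial (Fin n) ℝ) (g : Fin m2 → MvPolynomial (Fin n) ℝ)
    {A : Finset (Exp n)} (hA : A.Nonempty)
    (hKne : (semiK h g).Nonempty) (hfull : KFull A (semiK h g)) (harch : ArchQM h g) :
    (∀ p ∈ interior (PAcone A (semiK h g)), ∃ k : ℕ, toPoly A p ∈ IQSet h g k) ∧
    (∀ p : A → ℝ, (∃ k : ℕ, toPoly A p ∈ IQSet h g k) → p ∈ PAcone A (semiK h g)) :=
  statement_7_general h g hfull harch
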